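/- arXiv:1301.5447 — 2 statements merged into one kernel-verified Lean document; each statement's English description precedes it below -/
import Mathlib

section
/- Let γ > 0 and b > 0. Then for every x > 0 and t > 0 one has ∫_0^∞ p^{γ,b}(x,y,t) · |y − x| dy ≤ √(2γtx + t²·b·(b + γ)). -/
open MeasureTheory

/-- The kernel `p^{γ,b}(x,y,t)` for `b > 0`. -/
noncomputable def pker (γ b x y t : ℝ) : ℝ :=
  (γ * t) ^ (-(b / γ)) * Real.exp (-(x + y) / (γ * t)) * y ^ (b / γ - 1) *
    ∑' m : ℕ,
      (x * y) ^ m / ((m.factorial : ℝ) * Real.Gamma ((m : ℝ) + b / γ) * (γ * t) ^ (2 * m))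

/-!
For `y > 0` the kernel is a Poisson mixture of Gamma densities: with `c = γt`,
`p^{γ,b}(x,y,t) = ∑ₘ Poisson_{x/c}(m) · Gamma(m + b/γ, rate 1/c)(y)`.
Integrating term by term, `p^{γ,b}(x,·,t)` is a probability density on `(0,∞)` whose moments
are Poisson averages of Gamma moments; in particular `∫ p (y - x)² dy = 2γtx + t²b(b + γ)`.
The bound is then Jensen's inequality `∫ p |y - x| ≤ (∫ p (y - x)²)^{1/2}`.
-/

open ProbabilityTheory Real Set Nat
open scoped ENNReal

theorem MeasureTheory.integrable_tsum_of_summable_integral_norm {α E ι : Type*}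
    [MeasurableSpace α] {μ : Measure α} [NormedAddCommGroup E] [CompleteSpace E] [Countable ι]
    {F : ι → α → E} (hF_int : ∀ i, Integrable (F i) μ)
    (hF_sum : Summable fun i ↦ ∫ a, ‖F i a‖ ∂μ) :
    Integrable (fun a ↦ ∑' i, F i a) μ := by
  have hL1 : ∑' i, ‖(hF_int i).toL1 (F i)‖ₑ ≠ ∞ := by
    simp_rw [Integrable.enorm_toL1, ← ofReal_integral_norm_eq_lintegral_enorm (hF_int _)]
    rw [← ENNReal.ofReal_tsum_of_nonneg (fun i ↦ integral_nonneg fun a ↦ norm_nonneg _)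
      hF_sum]
    exact ENNReal.ofReal_ne_top
  have hcoe : ∀ᵐ a ∂μ, ∀ i, (hF_int i).toL1 (F i) a = F i a :=
    ae_all_iff.2 fun i ↦ Integrable.coeFn_toL1 (hF_int i)
  refine (L1.integrable_coeFn (∑' i, (hF_int i).toL1 (F i))).congr ?_
  filter_upwards [Lp.coeFn_tsum hL1, hcoe] with a hsum hcoe
  rw [hsum]
  simp only [hcoe]

theorem MeasureTheory.integrable_tsum_and_integral_tsum_of_nonneg {α ι : Type*}
    [MeasurableSpace α] {μ : Measure α} [Countable ι] {F : ι → α → ℝ} {M : ℝ}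
    (hF_int : ∀ i, Integrable (F i) μ) (hF_nonneg : ∀ i, 0 ≤ᵐ[μ] F i)
    (hM : HasSum (fun i ↦ ∫ a, F i a ∂μ) M) :
    Integrable (fun a ↦ ∑' i, F i a) μ ∧ ∫ a, ∑' i, F i a ∂μ = M := by
  have hF_sum : Summable fun i ↦ ∫ a, ‖F i a‖ ∂μ := by
    refine hM.summable.congr fun i ↦ integral_congr_ae ?_
    filter_upwards [hF_nonneg i] with a ha using (norm_of_nonneg ha).symm
  exact ⟨integrable_tsum_of_summable_integral_norm hF_int hF_sum,
    (hasSum_integral_of_summable_integral_norm hF_int hF_sum).unique hM⟩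

theorem MeasureTheory.integral_mul_abs_le_sqrt_integral_mul_sq {α : Type*} [MeasurableSpace α]
    {μ : Measure α} {p g : α → ℝ} (hp : 0 ≤ᵐ[μ] p) (hp_int : Integrable p μ)
    (hp_one : ∫ a, p a ∂μ = 1) (hpg : Integrable (fun a ↦ p a * g a ^ 2) μ) :
    ∫ a, p a * |g a| ∂μ ≤ √(∫ a, p a * g a ^ 2 ∂μ) := by
  set I := ∫ a, p a * |g a| ∂μ
  rcases le_or_gt I 0 with hI | hI
  · exact hI.trans (sqrt_nonneg _)
  -- AM-GM `2 I |g| ≤ I² + g²`, with `I` itself as the scale, integrated against `p`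
  have hbound : 2 * I * I ≤ I ^ 2 + ∫ a, p a * g a ^ 2 ∂μ := by
    calc 2 * I * I = ∫ a, 2 * I * (p a * |g a|) ∂μ := (integral_const_mul _ _).symm
      _ ≤ ∫ a, (I ^ 2 * p a + p a * g a ^ 2) ∂μ := by
        refine integral_mono_of_nonneg ?_ ((hp_int.const_mul _).add hpg) ?_
        · filter_upwards [hp] with a (ha : 0 ≤ p a) using by positivity
        · filter_upwards [hp] with a (ha : 0 ≤ p a)
          nlinarith [mul_nonneg ha (sq_nonneg (I - |g a|)), sq_abs (g a)]
      _ = I ^ 2 + ∫ a, p a * g a ^ 2 ∂μ := by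
        rw [integral_add (hp_int.const_mul _) hpg, integral_const_mul, hp_one, mul_one]
  exact le_sqrt_of_sq_le (by linarith)

/-- Mathlib's `poissonPMFReal`, but with a real parameter. -/
noncomputable def poissonWeight (u : ℝ) (m : ℕ) : ℝ := exp (-u) * (u ^ m / m !)

lemma poissonWeight_nonneg {u : ℝ} (hu : 0 ≤ u) (m : ℕ) : 0 ≤ poissonWeight u m := by
  unfold poissonWeight
  positivity

lemma hasSum_poissonWeight (u : ℝ) : HasSum (poissonWeight u) 1 := by
  have h := (NormedSpace.expSeries_div_hasSum_exp u).mul_left (exp (-u))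
  rwa [← congrFun Real.exp_eq_exp_ℝ, ← exp_add, neg_add_cancel, exp_zero] at h

lemma succ_mul_poissonWeight_succ (u : ℝ) (m : ℕ) :
    (m + 1 : ℝ) * poissonWeight u (m + 1) = u * poissonWeight u m := by
  simp only [poissonWeight, factorial_succ, cast_mul, pow_succ]
  field_simp
  push_cast
  ring

lemma HasSum.nat_mul_poissonWeight {u S : ℝ} {g : ℕ → ℝ}
    (h : HasSum (fun m ↦ g (m + 1) * poissonWeight u m) S) :
    HasSum (fun m : ℕ ↦ m * g m * poissonWeight u m) (u * S) := by
  have hshift : (fun m : ℕ ↦ ((m + 1 : ℕ) : ℝ) * g (m + 1) * poissonWeight u (m + 1)) =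
      fun m ↦ u * (g (m + 1) * poissonWeight u m) := by
    ext m
    push_cast
    linear_combination g (m + 1) * succ_mul_poissonWeight_succ u m
  rw [← hasSum_nat_add_iff' 1, Finset.sum_range_one, cast_zero, zero_mul, zero_mul, sub_zero,
    hshift]
  exact h.mul_left u

lemma hasSum_nat_mul_poissonWeight (u : ℝ) :
    HasSum (fun m : ℕ ↦ m * poissonWeight u m) u := by
  have h := HasSum.nat_mul_poissonWeight (g := fun _ ↦ 1) (by simpa using hasSum_poissonWeight u)
  simpa only [mul_one] using h

lemma hasSum_nat_sq_mul_poissonWeight (u : ℝ) :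
    HasSum (fun m : ℕ ↦ m ^ 2 * poissonWeight u m) (u ^ 2 + u) := by
  have h : HasSum (fun m : ℕ ↦ ((m + 1 : ℕ) : ℝ) * poissonWeight u m) (u + 1) := by
    push_cast
    simp_rw [add_mul, one_mul]
    exact (hasSum_nat_mul_poissonWeight u).add (hasSum_poissonWeight u)
  convert h.nat_mul_poissonWeight (g := fun m ↦ (m : ℝ)) using 1
  · ext m; ring
  · ring

lemma gammaPDFReal_mul_pow_of_pos {a r y : ℝ} (hy : 0 < y) (k : ℕ) :
    gammaPDFReal a r y * y ^ k = r ^ a / Gamma a * (y ^ (a + k - 1) * exp (-(r * y))) := by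
  rw [gammaPDFReal, if_pos hy.le, ← rpow_natCast, add_sub_right_comm, rpow_add hy]
  ring

lemma integrableOn_gammaPDFReal_mul_pow {a r : ℝ} (ha : 0 < a) (hr : 0 < r) (k : ℕ) :
    IntegrableOn (fun y ↦ gammaPDFReal a r y * y ^ k) (Ioi 0) := by
  have h := integrableOn_rpow_mul_exp_neg_mul_rpow (s := a + k - 1)
    (by linarith [k.cast_nonneg (α := ℝ)]) one_pos hr
  simp only [rpow_one] at h
  refine IntegrableOn.congr_fun (h.const_mul (r ^ a / Gamma a)) (fun y hy ↦ ?_) measurableSet_Ioi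
  rw [gammaPDFReal_mul_pow_of_pos hy, neg_mul]

lemma integral_gammaPDFReal_mul_pow {a r : ℝ} (ha : 0 < a) (hr : 0 < r) (k : ℕ) :
    ∫ y in Ioi 0, gammaPDFReal a r y * y ^ k = Gamma (a + k) / Gamma a / r ^ k := by
  rw [setIntegral_congr_fun measurableSet_Ioi fun y hy ↦ gammaPDFReal_mul_pow_of_pos hy k,
    integral_const_mul, integral_rpow_mul_exp_neg_mul_Ioi (by positivity) hr, one_div,
    inv_rpow hr.le, rpow_add hr, rpow_natCast]
  have hΓ : Gamma a ≠ 0 := (Gamma_pos_of_pos ha).ne'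
  field_simp

lemma pker_eq_tsum_poissonWeight_mul_gammaPDFReal {γ b x y t : ℝ} (hγt : 0 < γ * t)
    (hy : 0 < y) :
    pker γ b x y t = ∑' m : ℕ,
      poissonWeight (x / (γ * t)) m * gammaPDFReal (m + b / γ) (γ * t)⁻¹ y := by
  rw [pker, ← tsum_mul_left]
  refine tsum_congr fun m ↦ ?_
  have hexp : exp (-(x + y) / (γ * t)) = exp (-(x / (γ * t))) * exp (-((γ * t)⁻¹ * y)) := by
    rw [← exp_add]
    ring_nf
  rw [poissonWeight, gammaPDFReal, if_pos hy.le, inv_rpow hγt.le, rpow_add hγt, rpow_neg hγt.le,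
    add_sub_assoc, rpow_add hy, rpow_natCast, rpow_natCast, hexp]
  ring

lemma pker_moment_of_hasSum {γ b x t : ℝ} (hγ : 0 < γ) (hb : 0 < b) (hx : 0 ≤ x) (ht : 0 < t)
    (k : ℕ) {M : ℝ}
    (hM : HasSum (fun m : ℕ ↦ poissonWeight (x / (γ * t)) m *
      (Gamma (m + b / γ + k) / Gamma (m + b / γ) * (γ * t) ^ k)) M) :
    IntegrableOn (fun y ↦ pker γ b x y t * y ^ k) (Ioi 0) ∧
      ∫ y in Ioi 0, pker γ b x y t * y ^ k = M := by
  have hγt : 0 < γ * t := mul_pos hγ ht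
  have hr : 0 < (γ * t)⁻¹ := inv_pos.2 hγt
  have ha (m : ℕ) : 0 < (m : ℝ) + b / γ := by positivity
  set F : ℕ → ℝ → ℝ := fun m y ↦
    poissonWeight (x / (γ * t)) m * (gammaPDFReal (m + b / γ) (γ * t)⁻¹ y * y ^ k)
  have hF : EqOn (fun y ↦ pker γ b x y t * y ^ k) (fun y ↦ ∑' m, F m y) (Ioi 0) := by
    intro y hy
    simp only [F, pker_eq_tsum_poissonWeight_mul_gammaPDFReal hγt hy, ← tsum_mul_right,
      mul_assoc]
  have hF_integral (m : ℕ) : ∫ y in Ioi 0, F m y = poissonWeight (x / (γ * t)) m *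
      (Gamma (m + b / γ + k) / Gamma (m + b / γ) * (γ * t) ^ k) := by
    rw [integral_const_mul, integral_gammaPDFReal_mul_pow (ha m) hr, inv_pow, div_inv_eq_mul]
  have hF_nonneg (m : ℕ) : 0 ≤ᵐ[volume.restrict (Ioi 0)] F m := by
    filter_upwards [ae_restrict_mem measurableSet_Ioi] with y hy
    exact mul_nonneg (poissonWeight_nonneg (div_nonneg hx hγt.le) m)
      (mul_nonneg (gammaPDFReal_nonneg (ha m) hr y) (pow_nonneg (le_of_lt hy) k))
  obtain ⟨hint, hval⟩ := integrable_tsum_and_integral_tsum_of_nonneg (M := M)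
    (fun m ↦ (integrableOn_gammaPDFReal_mul_pow (ha m) hr k).const_mul _) hF_nonneg
    (by rwa [funext hF_integral])
  exact ⟨IntegrableOn.congr_fun hint hF.symm measurableSet_Ioi,
    (setIntegral_congr_fun measurableSet_Ioi hF).trans hval⟩

lemma pker_nonneg {γ b x y t : ℝ} (hγ : 0 < γ) (hb : 0 < b) (hx : 0 ≤ x) (ht : 0 < t)
    (hy : 0 < y) : 0 ≤ pker γ b x y t := by
  have hγt : 0 < γ * t := mul_pos hγ ht
  rw [pker_eq_tsum_poissonWeight_mul_gammaPDFReal hγt hy]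
  exact tsum_nonneg fun m ↦ mul_nonneg (poissonWeight_nonneg (div_nonneg hx hγt.le) m)
    (gammaPDFReal_nonneg (by positivity) (inv_pos.2 hγt) y)

section Moments

variable {γ b x t : ℝ}

lemma pker_moment_zero (hγ : 0 < γ) (hb : 0 < b) (hx : 0 ≤ x) (ht : 0 < t) :
    IntegrableOn (fun y ↦ pker γ b x y t) (Ioi 0) ∧ ∫ y in Ioi 0, pker γ b x y t = 1 := by
  have hM : HasSum (fun m : ℕ ↦ poissonWeight (x / (γ * t)) m *
      (Gamma (m + b / γ + (0 : ℕ)) / Gamma (m + b / γ) * (γ * t) ^ 0)) 1 := by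
    convert hasSum_poissonWeight (x / (γ * t)) using 1
    ext m
    rw [cast_zero, add_zero, div_self (Gamma_pos_of_pos (by positivity)).ne', pow_zero, one_mul,
      mul_one]
  simpa using pker_moment_of_hasSum hγ hb hx ht 0 hM

lemma pker_moment_one (hγ : 0 < γ) (hb : 0 < b) (hx : 0 ≤ x) (ht : 0 < t) :
    IntegrableOn (fun y ↦ pker γ b x y t * y) (Ioi 0) ∧
      ∫ y in Ioi 0, pker γ b x y t * y = x + b * t := by
  set u := x / (γ * t)
  have hM : HasSum (fun m : ℕ ↦ poissonWeight u m *
      (Gamma (m + b / γ + (1 : ℕ)) / Gamma (m + b / γ) * (γ * t) ^ 1)) (x + b * t) := by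
    have hterm : (fun m : ℕ ↦ poissonWeight u m *
        (Gamma (m + b / γ + (1 : ℕ)) / Gamma (m + b / γ) * (γ * t) ^ 1)) =
        fun m ↦ γ * t * (m * poissonWeight u m + b / γ * poissonWeight u m) := by
      ext m
      have ha : (m : ℝ) + b / γ ≠ 0 := by positivity
      rw [cast_one, Gamma_add_one ha]
      field_simp
    have hsum : x + b * t = γ * t * (u + b / γ * 1) := by
      simp only [u]
      field_simp
    rw [hterm, hsum]
    exact ((hasSum_nat_mul_poissonWeight u).add
      ((hasSum_poissonWeight u).mul_left (b / γ))).mul_left (γ * t)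
  simpa using pker_moment_of_hasSum hγ hb hx ht 1 hM

lemma pker_moment_two (hγ : 0 < γ) (hb : 0 < b) (hx : 0 ≤ x) (ht : 0 < t) :
    IntegrableOn (fun y ↦ pker γ b x y t * y ^ 2) (Ioi 0) ∧
      ∫ y in Ioi 0, pker γ b x y t * y ^ 2 =
        x ^ 2 + 2 * (b + γ) * t * x + b * (b + γ) * t ^ 2 := by
  set u := x / (γ * t)
  have hM : HasSum (fun m : ℕ ↦ poissonWeight u m *
      (Gamma (m + b / γ + (2 : ℕ)) / Gamma (m + b / γ) * (γ * t) ^ 2))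
      (x ^ 2 + 2 * (b + γ) * t * x + b * (b + γ) * t ^ 2) := by
    have hterm : (fun m : ℕ ↦ poissonWeight u m *
        (Gamma (m + b / γ + (2 : ℕ)) / Gamma (m + b / γ) * (γ * t) ^ 2)) =
        fun m ↦ (γ * t) ^ 2 * (m ^ 2 * poissonWeight u m + (2 * (b / γ) + 1) *
          (m * poissonWeight u m) + b / γ * (b / γ + 1) * poissonWeight u m) := by
      ext m
      have ha : (m : ℝ) + b / γ ≠ 0 := by positivity
      have ha' : (m : ℝ) + b / γ + 1 ≠ 0 := by positivity
      rw [cast_two, ← one_add_one_eq_two, ← add_assoc, Gamma_add_one ha', Gamma_add_one ha]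
      field_simp
      ring
    have hsum : x ^ 2 + 2 * (b + γ) * t * x + b * (b + γ) * t ^ 2 =
        (γ * t) ^ 2 * (u ^ 2 + u + (2 * (b / γ) + 1) * u + b / γ * (b / γ + 1) * 1) := by
      simp only [u]
      field_simp
      ring
    rw [hterm, hsum]
    exact (((hasSum_nat_sq_mul_poissonWeight u).add
      ((hasSum_nat_mul_poissonWeight u).mul_left (2 * (b / γ) + 1))).add
      ((hasSum_poissonWeight u).mul_left (b / γ * (b / γ + 1)))).mul_left ((γ * t) ^ 2)
  exact pker_moment_of_hasSum hγ hb hx ht 2 hM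

lemma pker_central_moment_two (hγ : 0 < γ) (hb : 0 < b) (hx : 0 ≤ x) (ht : 0 < t) :
    IntegrableOn (fun y ↦ pker γ b x y t * (y - x) ^ 2) (Ioi 0) ∧
      ∫ y in Ioi 0, pker γ b x y t * (y - x) ^ 2 = 2 * γ * t * x + t ^ 2 * b * (b + γ) := by
  obtain ⟨h0, hM0⟩ := pker_moment_zero hγ hb hx ht
  obtain ⟨h1, hM1⟩ := pker_moment_one hγ hb hx ht
  obtain ⟨h2, hM2⟩ := pker_moment_two hγ hb hx ht
  have hexpand : (fun y ↦ pker γ b x y t * (y - x) ^ 2) =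
      fun y ↦ pker γ b x y t * y ^ 2 - 2 * x * (pker γ b x y t * y) +
        x ^ 2 * pker γ b x y t := by
    ext y
    ring
  have h21 : IntegrableOn (fun y ↦ pker γ b x y t * y ^ 2 - 2 * x * (pker γ b x y t * y))
      (Ioi 0) := h2.sub (h1.const_mul _)
  rw [hexpand]
  refine ⟨h21.add (h0.const_mul _), ?_⟩
  rw [integral_add h21 (h0.const_mul _), integral_sub h2 (h1.const_mul _),
    integral_const_mul, integral_const_mul, hM0, hM1, hM2]
  ring

end Moments

/-- For `γ > 0`, `b > 0`, `x > 0` and `t > 0`,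
`∫_0^∞ p^{γ,b}(x,y,t) |y − x| dy ≤ √(2γtx + t²b(b + γ))`. -/
theorem stmt8 (γ b : ℝ) (hγ : 0 < γ) (hb : 0 < b) (x t : ℝ) (hx : 0 < x) (ht : 0 < t) :
    (∫ y in Set.Ioi (0:ℝ), pker γ b x y t * |y - x|) ≤
      Real.sqrt (2 * γ * t * x + t ^ 2 * b * (b + γ)) := by
  obtain ⟨hp_int, hp_one⟩ := pker_moment_zero hγ hb hx.le ht
  obtain ⟨hsq_int, hsq⟩ := pker_central_moment_two hγ hb hx.le ht
  have hp_nonneg : 0 ≤ᵐ[volume.restrict (Ioi 0)] fun y ↦ pker γ b x y t := by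
    filter_upwards [ae_restrict_mem measurableSet_Ioi] with y hy
    exact pker_nonneg hγ hb hx.le ht hy
  rw [← hsq]
  exact integral_mul_abs_le_sqrt_integral_mul_sq hp_nonneg hp_int hp_one hsq_int
end

section
/- Let γ > 0. For every x > 0 and t > 0 one has: (i) T_t^{γ}(y ↦ y − x)(x) = 0; (ii) T_t^{γ}(y ↦ (y − x)²)(x) = 2γtx; and consequently (iii) T_t^{γ}(y ↦ |y − x|)(x) ≤ √(2γtx). -/
/-!
Write `a = x/(γt)`. The Gamma integrals `∫_0^∞ e^{-z} z^m dz = m!` turn `T_t^γ` of a quadratic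
into combinations of the series `∑ aᵐ/m!` and `∑ m aᵐ/m!`, whence
`T_t^γ(α + βy + δy²)(x) = α + βx + δ(x² + 2γtx)`; this gives (i) and (ii). The operator is
monotone on nonnegative functions, so (iii) follows from the AM-GM bound
`|y - x| ≤ ((y - x)² + L²) / (2L)` with `L = √(2γtx)`, whose image under `T_t^γ` is
`(2γtx + L²) / (2L) = L`.
-/

open MeasureTheory

/-- The operator `T_t^γ = P_t^{γ,0}` (case `b = 0`):
`T_t^γ g(x) = e^{−x/(γt)} g(0) + e^{−x/(γt)} ∑_{m=0}^∞ (x/(γt))^{m+1} (1/(m!(m+1)!))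
  ∫_0^∞ e^{−z} z^m g(γzt) dz`. -/
noncomputable def Tsem (γ t : ℝ) (g : ℝ → ℝ) (x : ℝ) : ℝ :=
  Real.exp (-x / (γ * t)) * g 0 +
    Real.exp (-x / (γ * t)) *
      ∑' m : ℕ, (x / (γ * t)) ^ (m + 1) * (1 / ((m.factorial : ℝ) * ((m + 1).factorial : ℝ))) *
        ∫ z in Set.Ioi (0:ℝ), Real.exp (-z) * z ^ m * g (γ * z * t)

open Real Set
open scoped Nat

lemma integrableOn_exp_neg_mul_pow (m : ℕ) :
    IntegrableOn (fun z : ℝ => exp (-z) * z ^ m) (Ioi 0) := by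
  simpa using Real.GammaIntegral_convergent (s := (m : ℝ) + 1) (by positivity)

lemma integral_exp_neg_mul_pow (m : ℕ) :
    ∫ z in Ioi (0:ℝ), exp (-z) * z ^ m = m ! := by
  simpa using (Real.Gamma_eq_integral (s := (m : ℝ) + 1) (by positivity)).symm.trans
    (Real.Gamma_nat_eq_factorial m)

lemma hasSum_pow_div_factorial (a : ℝ) : HasSum (fun m : ℕ => a ^ m / m !) (exp a) := by
  simpa only [← exp_eq_exp_ℝ] using NormedSpace.expSeries_div_hasSum_exp a

lemma hasSum_pow_succ_div_factorial_succ (a : ℝ) :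
    HasSum (fun m : ℕ => a ^ (m + 1) / (m + 1)!) (exp a - 1) := by
  simpa using (hasSum_nat_add_iff' 1).2 (hasSum_pow_div_factorial a)

lemma hasSum_natCast_mul_pow_div_factorial (a : ℝ) :
    HasSum (fun m : ℕ => m * a ^ m / m !) (a * exp a) := by
  have shift (m : ℕ) : ((m + 1 : ℕ) : ℝ) * a ^ (m + 1) / (m + 1)! = a * (a ^ m / m !) := by
    rw [Nat.factorial_succ]
    push_cast
    field_simp
    ring
  rw [← hasSum_nat_add_iff' 1, Finset.sum_range_one, Nat.cast_zero, zero_mul, zero_div, sub_zero]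
  simpa only [shift] using (hasSum_pow_div_factorial a).mul_left a

noncomputable def tsemTerm (γ t : ℝ) (g : ℝ → ℝ) (x : ℝ) (m : ℕ) : ℝ :=
  (x / (γ * t)) ^ (m + 1) * (1 / ((m ! : ℝ) * ((m + 1)! : ℝ))) *
    ∫ z in Ioi (0:ℝ), exp (-z) * z ^ m * g (γ * z * t)

lemma Tsem_eq_exp_mul (γ t : ℝ) (g : ℝ → ℝ) (x : ℝ) :
    Tsem γ t g x = exp (-x / (γ * t)) * (g 0 + ∑' m, tsemTerm γ t g x m) := by
  rw [Tsem, mul_add]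
  rfl

section Quadratic

variable (γ t α β δ : ℝ)

lemma exp_neg_mul_pow_mul_quadratic (z : ℝ) (m : ℕ) :
    exp (-z) * z ^ m * (α + β * (γ * z * t) + δ * (γ * z * t) ^ 2) =
      α * (exp (-z) * z ^ m) + β * (γ * t) * (exp (-z) * z ^ (m + 1)) +
        δ * (γ * t) ^ 2 * (exp (-z) * z ^ (m + 2)) := by
  ring

lemma integrableOn_exp_neg_mul_pow_mul_quadratic (m : ℕ) :
    IntegrableOn (fun z => exp (-z) * z ^ m * (α + β * (γ * z * t) + δ * (γ * z * t) ^ 2))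
      (Ioi 0) := by
  simp only [exp_neg_mul_pow_mul_quadratic]
  exact (((integrableOn_exp_neg_mul_pow m).const_mul α).add
    ((integrableOn_exp_neg_mul_pow (m + 1)).const_mul _)).add
      ((integrableOn_exp_neg_mul_pow (m + 2)).const_mul _)

lemma integral_exp_neg_mul_pow_mul_quadratic (m : ℕ) :
    ∫ z in Ioi (0:ℝ), exp (-z) * z ^ m * (α + β * (γ * z * t) + δ * (γ * z * t) ^ 2) =
      α * m ! + β * (γ * t) * (m + 1)! + δ * (γ * t) ^ 2 * (m + 2)! := by
  have h₀ := (integrableOn_exp_neg_mul_pow m).const_mul α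
  have h₁ := (integrableOn_exp_neg_mul_pow (m + 1)).const_mul (β * (γ * t))
  have h₂ := (integrableOn_exp_neg_mul_pow (m + 2)).const_mul (δ * (γ * t) ^ 2)
  simp only [exp_neg_mul_pow_mul_quadratic]
  rw [integral_add ?_ h₂, integral_add h₀ h₁, integral_const_mul, integral_const_mul,
    integral_const_mul, integral_exp_neg_mul_pow, integral_exp_neg_mul_pow,
    integral_exp_neg_mul_pow]
  exact h₀.add h₁

lemma tsemTerm_quadratic (x : ℝ) (m : ℕ) :
    tsemTerm γ t (fun y => α + β * y + δ * y ^ 2) x m =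
      α * ((x / (γ * t)) ^ (m + 1) / (m + 1)!) +
        (β * (γ * t) + 2 * δ * (γ * t) ^ 2) * (x / (γ * t)) * ((x / (γ * t)) ^ m / m !) +
        δ * (γ * t) ^ 2 * (x / (γ * t)) * (m * (x / (γ * t)) ^ m / m !) := by
  rw [tsemTerm, integral_exp_neg_mul_pow_mul_quadratic, Nat.factorial_succ (m + 1),
    Nat.factorial_succ m]
  generalize x / (γ * t) = a
  push_cast
  field_simp
  ring

lemma hasSum_tsemTerm_quadratic (x : ℝ) :
    HasSum (tsemTerm γ t (fun y => α + β * y + δ * y ^ 2) x)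
      (α * (exp (x / (γ * t)) - 1) +
        (β * (γ * t) + 2 * δ * (γ * t) ^ 2) * (x / (γ * t)) * exp (x / (γ * t)) +
        δ * (γ * t) ^ 2 * (x / (γ * t)) * (x / (γ * t) * exp (x / (γ * t)))) := by
  simp only [funext (tsemTerm_quadratic γ t α β δ x)]
  exact (((hasSum_pow_succ_div_factorial_succ _).mul_left _).add
    ((hasSum_pow_div_factorial _).mul_left _)).add
      ((hasSum_natCast_mul_pow_div_factorial _).mul_left _)

lemma Tsem_quadratic {x : ℝ} (hγt : γ * t ≠ 0) :
    Tsem γ t (fun y => α + β * y + δ * y ^ 2) x =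
      α + β * x + δ * (x ^ 2 + 2 * γ * t * x) := by
  rw [Tsem_eq_exp_mul, (hasSum_tsemTerm_quadratic γ t α β δ x).tsum_eq, neg_div, exp_neg]
  have hγ : γ ≠ 0 := left_ne_zero_of_mul hγt
  have ht : t ≠ 0 := right_ne_zero_of_mul hγt
  field_simp
  ring

end Quadratic

section Monotone

variable {γ t x : ℝ} {g h : ℝ → ℝ}

lemma tsemTerm_nonneg (hγt : 0 < γ * t) (hx : 0 ≤ x) (hg : 0 ≤ g) (m : ℕ) :
    0 ≤ tsemTerm γ t g x m := by
  have hint : 0 ≤ ∫ z in Ioi (0:ℝ), exp (-z) * z ^ m * g (γ * z * t) :=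
    setIntegral_nonneg measurableSet_Ioi fun z hz => mul_nonneg
      (mul_nonneg (exp_pos _).le (pow_nonneg (le_of_lt hz) m)) (hg _)
  unfold tsemTerm
  positivity

lemma tsemTerm_mono (hγt : 0 < γ * t) (hx : 0 ≤ x) (hg : 0 ≤ g) (hgh : g ≤ h) (m : ℕ)
    (hh : IntegrableOn (fun z => exp (-z) * z ^ m * h (γ * z * t)) (Ioi 0)) :
    tsemTerm γ t g x m ≤ tsemTerm γ t h x m := by
  unfold tsemTerm
  refine mul_le_mul_of_nonneg_left (integral_mono_of_nonneg ?_ hh ?_) (by positivity) <;>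
    filter_upwards [ae_restrict_mem measurableSet_Ioi] with z hz <;>
    have hw : 0 ≤ exp (-z) * z ^ m := mul_nonneg (exp_pos _).le (pow_nonneg (le_of_lt hz) m)
  · exact mul_nonneg hw (hg _)
  · exact mul_le_mul_of_nonneg_left (hgh _) hw

lemma Tsem_mono (hγt : 0 < γ * t) (hx : 0 ≤ x) (hg : 0 ≤ g) (hgh : g ≤ h)
    (hh : ∀ m : ℕ, IntegrableOn (fun z => exp (-z) * z ^ m * h (γ * z * t)) (Ioi 0))
    (hsum : Summable (tsemTerm γ t h x)) :
    Tsem γ t g x ≤ Tsem γ t h x := by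
  have hle m := tsemTerm_mono hγt hx hg hgh m (hh m)
  rw [Tsem_eq_exp_mul, Tsem_eq_exp_mul]
  refine mul_le_mul_of_nonneg_left (add_le_add (hgh 0) ?_) (exp_pos _).le
  exact (hsum.of_nonneg_of_le (tsemTerm_nonneg hγt hx hg) hle).tsum_le_tsum hle hsum

lemma Tsem_le_of_le_quadratic {α β δ : ℝ} (hγt : 0 < γ * t) (hx : 0 ≤ x) (hg : 0 ≤ g)
    (hgq : ∀ y, g y ≤ α + β * y + δ * y ^ 2) :
    Tsem γ t g x ≤ α + β * x + δ * (x ^ 2 + 2 * γ * t * x) :=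
  Tsem_quadratic γ t α β δ hγt.ne' ▸ Tsem_mono hγt hx hg hgq
    (integrableOn_exp_neg_mul_pow_mul_quadratic γ t α β δ)
    (hasSum_tsemTerm_quadratic γ t α β δ x).summable

end Monotone

/-- For `γ > 0`, `x > 0`, `t > 0`: (i) `T_t^γ(y ↦ y − x)(x) = 0`;
(ii) `T_t^γ(y ↦ (y − x)²)(x) = 2γtx`; (iii) `T_t^γ(y ↦ |y − x|)(x) ≤ √(2γtx)`. -/
theorem stmt9 (γ : ℝ) (hγ : 0 < γ) (x t : ℝ) (hx : 0 < x) (ht : 0 < t) :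
    Tsem γ t (fun y => y - x) x = 0 ∧
    Tsem γ t (fun y => (y - x) ^ 2) x = 2 * γ * t * x ∧
    Tsem γ t (fun y => |y - x|) x ≤ Real.sqrt (2 * γ * t * x) := by
  have hγt : 0 < γ * t := mul_pos hγ ht
  refine ⟨?_, ?_, ?_⟩
  · have hlin : (fun y => y - x) = fun y => -x + 1 * y + 0 * y ^ 2 := by funext y; ring
    rw [hlin, Tsem_quadratic γ t _ _ _ hγt.ne']
    ring
  · have hsq : (fun y => (y - x) ^ 2) = fun y => x ^ 2 + -2 * x * y + 1 * y ^ 2 := by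
      funext y; ring
    rw [hsq, Tsem_quadratic γ t _ _ _ hγt.ne']
    ring
  · set L := √(2 * γ * t * x)
    have hL : 0 < L := sqrt_pos.2 (by positivity)
    have hL2 : L ^ 2 = 2 * γ * t * x := sq_sqrt (by positivity)
    have hbound (y : ℝ) :
        |y - x| ≤ (x ^ 2 + L ^ 2) / (2 * L) + -x / L * y + 1 / (2 * L) * y ^ 2 := by
      have hamgm := two_mul_le_add_sq |y - x| L
      rw [sq_abs] at hamgm
      field_simp
      linarith
    calc Tsem γ t (fun y => |y - x|) x
        ≤ _ := Tsem_le_of_le_quadratic hγt hx.le (fun y => abs_nonneg _) hbound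
      _ = L := by
        rw [← hL2]
        field_simp
        ring
end
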